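/- (Monotone decrease of one RCD iteration.) Let n ≥ 2 and let R̃ ∈ ℝ^{3n×3n} be symmetric with all diagonal 3×3 blocks equal to 0₃. Let R ∈ ℝ^{3n×3} be the column-stacking of orthogonal matrices R₁,…,Rₙ ∈ O(3). Take k = 1, let W ∈ ℝ^{3n×3} be the first block column of R̃ (so its first 3×3 block W₁ = 0₃), write R' ∈ ℝ^{3(n−1)×3} for the stacking of R₂,…,Rₙ and C ∈ ℝ^{3(n−1)×3} for the stacking of W₂,…,Wₙ, and assume R'ᵀ C is invertible. Define Z = R (Rᵀ W), S = Z ((Wᵀ Z)^{1/2})^†, and let R_new ∈ ℝ^{3n×3} be the block vector with first block I₃ and i-th block S_i for i = 2,…,n. Then −tr(R_newᵀ R̃ R_new) ≤ −tr(Rᵀ R̃ R); i.e., one RCD iteration does not increase the objective of the primal problem. -/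

import Mathlib

/-!
Write `M = Rᵀ W`; since `W₁ = 0`, `M = R'ᵀ C` is invertible. With the polar decomposition
`M = U P`, `P = (MᵀM)^{1/2}` invertible and `U` orthogonal, the pseudoinverse is an inverse and
`S = R U`, so `R_new = R U + E (I - R₁ U)` with `E = e₁ ⊗ I₃`. In the expansion of
`tr (R_newᵀ R̃ R_new)` the `R U` term equals `tr (Rᵀ R̃ R)`, the `E`–`E` term is the zero diagonal
block, and since `Eᵀ R̃ R U = Wᵀ R U = P` the cross term is `2 (tr P - tr (Uᵀ R₁ᵀ P)) ≥ 0`: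
an orthogonal matrix can only decrease the trace of a positive semidefinite one.
-/

open Matrix

attribute [local instance] Classical.propDecidable

/-- Column-stacking `[A₁ᵀ ⋯ Aₘᵀ]ᵀ ∈ ℝ^{3m×3}` of 3×3 matrices. -/
def stack {m : ℕ} (As : Fin m → Matrix (Fin 3) (Fin 3) ℝ) :
    Matrix (Fin m × Fin 3) (Fin 3) ℝ :=
  fun p b => As p.1 p.2 b

/-- The `(i,j)`-th 3×3 block of a `3n×3n` matrix. -/
def blk {n : ℕ} (A : Matrix (Fin n × Fin 3) (Fin n × Fin 3) ℝ) (i j : Fin n) :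
    Matrix (Fin 3) (Fin 3) ℝ :=
  fun a b => A (i, a) (j, b)

/-- The unique positive semidefinite square root of a positive semidefinite real matrix
(junk value `0` if the matrix is not positive semidefinite). -/
noncomputable def psqrt {ι : Type*} [Fintype ι] [DecidableEq ι]
    (M : Matrix ι ι ℝ) : Matrix ι ι ℝ :=
  if h : ∃ N : Matrix ι ι ℝ, N.PosSemidef ∧ N * N = M then h.choose else 0

/-- The Moore–Penrose pseudoinverse of a square real matrix, characterized by the four
Penrose conditions (junk value `0` if no such matrix exists). -/
noncomputable def pinv {ι : Type*} [Fintype ι] [DecidableEq ι]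
    (M : Matrix ι ι ℝ) : Matrix ι ι ℝ :=
  if h : ∃ N : Matrix ι ι ℝ,
      M * N * M = M ∧ N * M * N = N ∧ (M * N)ᵀ = M * N ∧ (N * M)ᵀ = N * M then
    h.choose
  else 0

lemma posSemidef_transpose_mul_self {m n : Type*} [Fintype m] [Fintype n] (M : Matrix m n ℝ) :
    (Mᵀ * M).PosSemidef := by
  simpa only [conjTranspose_eq_transpose_of_trivial] using posSemidef_conjTranspose_mul_self M

section PolarDecomposition

variable {ι : Type*} [Fintype ι] [DecidableEq ι]

open scoped MatrixOrder in
lemma psqrt_spec {M : Matrix ι ι ℝ} (hM : M.PosSemidef) :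
    (psqrt M).PosSemidef ∧ psqrt M * psqrt M = M := by
  have h : ∃ N : Matrix ι ι ℝ, N.PosSemidef ∧ N * N = M :=
    ⟨CFC.sqrt M, (CFC.sqrt_nonneg M).posSemidef, CFC.sqrt_mul_sqrt_self M hM.nonneg⟩
  rw [psqrt, dif_pos h]
  exact h.choose_spec

lemma pinv_eq_inv {M : Matrix ι ι ℝ} (hM : IsUnit M.det) : pinv M = M⁻¹ := by
  have h : ∃ N : Matrix ι ι ℝ,
      M * N * M = M ∧ N * M * N = N ∧ (M * N)ᵀ = M * N ∧ (N * M)ᵀ = N * M :=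
    ⟨M⁻¹, by simp [mul_nonsing_inv _ hM, nonsing_inv_mul _ hM]⟩
  rw [pinv, dif_pos h]
  obtain ⟨hMNM, -⟩ := h.choose_spec
  calc h.choose = M⁻¹ * (M * h.choose * M) * M⁻¹ := by
        rw [mul_assoc M, nonsing_inv_mul_cancel_left _ _ hM, mul_nonsing_inv_cancel_right _ _ hM]
    _ = M⁻¹ := by rw [hMNM, nonsing_inv_mul _ hM, one_mul]

lemma transpose_psqrt_transpose_mul_self (M : Matrix ι ι ℝ) :
    (psqrt (Mᵀ * M))ᵀ = psqrt (Mᵀ * M) := by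
  simpa only [IsHermitian, conjTranspose_eq_transpose_of_trivial] using
    (psqrt_spec (posSemidef_transpose_mul_self M)).1.1

lemma psqrt_mul_self_transpose_mul_self (M : Matrix ι ι ℝ) :
    psqrt (Mᵀ * M) * psqrt (Mᵀ * M) = Mᵀ * M :=
  (psqrt_spec (posSemidef_transpose_mul_self M)).2

lemma isUnit_det_psqrt_transpose_mul_self {M : Matrix ι ι ℝ} (hM : IsUnit M.det) :
    IsUnit (psqrt (Mᵀ * M)).det := by
  have hsq : (psqrt (Mᵀ * M)).det * (psqrt (Mᵀ * M)).det = M.det * M.det := by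
    rw [← det_mul, psqrt_mul_self_transpose_mul_self, det_mul, det_transpose]
  exact (IsUnit.mul_iff.mp (hsq ▸ hM.mul hM)).1

noncomputable def polarFactor (M : Matrix ι ι ℝ) : Matrix ι ι ℝ :=
  M * (psqrt (Mᵀ * M))⁻¹

lemma transpose_mul_polarFactor {M : Matrix ι ι ℝ} (hM : IsUnit M.det) :
    Mᵀ * polarFactor M = psqrt (Mᵀ * M) :=
  calc Mᵀ * polarFactor M = psqrt (Mᵀ * M) * psqrt (Mᵀ * M) * (psqrt (Mᵀ * M))⁻¹ := by
        rw [psqrt_mul_self_transpose_mul_self, polarFactor, mul_assoc]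
    _ = psqrt (Mᵀ * M) :=
        mul_nonsing_inv_cancel_right _ _ (isUnit_det_psqrt_transpose_mul_self hM)

lemma polarFactor_transpose_mul_self {M : Matrix ι ι ℝ} (hM : IsUnit M.det) :
    (polarFactor M)ᵀ * polarFactor M = 1 := by
  nth_rewrite 1 [polarFactor]
  rw [transpose_mul, mul_assoc, transpose_mul_polarFactor hM, transpose_nonsing_inv,
    transpose_psqrt_transpose_mul_self, nonsing_inv_mul _ (isUnit_det_psqrt_transpose_mul_self hM)]

lemma mul_pinv_psqrt_eq_mul_polarFactor {κ : Type*} [Fintype κ] {R W : Matrix κ ι ℝ}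
    (hM : IsUnit (Rᵀ * W).det) :
    R * (Rᵀ * W) * pinv (psqrt (Wᵀ * (R * (Rᵀ * W)))) = R * polarFactor (Rᵀ * W) := by
  rw [← Matrix.mul_assoc Wᵀ, ← transpose_transpose R, ← transpose_mul, transpose_transpose,
    pinv_eq_inv (isUnit_det_psqrt_transpose_mul_self hM), Matrix.mul_assoc, polarFactor]

end PolarDecomposition

section TraceInequalities

variable {ι κ : Type*} [Fintype ι] [Fintype κ]

lemma trace_mul_le_trace_of_posSemidef [DecidableEq κ] {P V : Matrix κ κ ℝ} (hP : P.PosSemidef)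
    (hV : V * Vᵀ = 1) : (V * P).trace ≤ P.trace := by
  have hPt : Pᵀ = P := by
    simpa only [IsHermitian, conjTranspose_eq_transpose_of_trivial] using hP.1
  have hnonneg : 0 ≤ ((1 - V)ᵀ * P * (1 - V)).trace := by
    simpa only [conjTranspose_eq_transpose_of_trivial] using
      (hP.conjTranspose_mul_mul_same (1 - V)).trace_nonneg
  have hexpand : ((1 - V)ᵀ * P * (1 - V)).trace = 2 * (P.trace - (V * P).trace) := by
    have hVPV : (Vᵀ * P * V).trace = P.trace := by
      rw [trace_mul_cycle, hV, one_mul]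
    have hVtP : (Vᵀ * P).trace = (V * P).trace := by
      rw [← trace_transpose, transpose_mul, transpose_transpose, hPt, trace_mul_comm]
    simp only [transpose_sub, transpose_one, sub_mul, mul_sub, one_mul, mul_one, trace_sub,
      hVPV, hVtP, trace_mul_comm P V]
    ring
  linarith

lemma trace_transpose_mul_mul_add {A : Matrix ι ι ℝ} (hA : Aᵀ = A) (F G : Matrix ι κ ℝ) :
    ((F + G)ᵀ * A * (F + G)).trace
      = (Fᵀ * A * F).trace + 2 * (Gᵀ * A * F).trace + (Gᵀ * A * G).trace := by
  have hcross : (Fᵀ * A * G).trace = (Gᵀ * A * F).trace := by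
    rw [← trace_transpose, transpose_mul, transpose_mul, transpose_transpose, hA,
      Matrix.mul_assoc]
  simp only [transpose_add, Matrix.add_mul, Matrix.mul_add, trace_add, hcross]
  ring

lemma trace_transpose_mul_mul_of_mul_transpose_eq_one [DecidableEq κ] (A : Matrix ι ι ℝ)
    (R : Matrix ι κ ℝ) {U : Matrix κ κ ℝ} (hU : U * Uᵀ = 1) :
    ((R * U)ᵀ * A * (R * U)).trace = (Rᵀ * A * R).trace := by
  simp only [transpose_mul, Matrix.mul_assoc]
  rw [trace_mul_comm Uᵀ]
  simp only [Matrix.mul_assoc, hU, Matrix.mul_one]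

theorem trace_le_trace_of_rotate_and_reset [DecidableEq κ] {A : Matrix ι ι ℝ}
    {R E : Matrix ι κ ℝ} {U V P : Matrix κ κ ℝ} (hA : Aᵀ = A) (hE : Eᵀ * A * E = 0)
    (hU : Uᵀ * U = 1) (hV : Vᵀ * V = 1) (hP : P.PosSemidef) (hEP : Eᵀ * A * (R * U) = P) :
    (Rᵀ * A * R).trace ≤ ((R * U + E * (1 - V))ᵀ * A * (R * U + E * (1 - V))).trace := by
  have hcross : ((E * (1 - V))ᵀ * A * (R * U)).trace = P.trace - (Vᵀ * P).trace := by
    rw [transpose_mul, Matrix.mul_assoc, Matrix.mul_assoc, ← Matrix.mul_assoc Eᵀ, hEP,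
      transpose_sub, transpose_one, Matrix.sub_mul, Matrix.one_mul, trace_sub]
  have hreset : ((E * (1 - V))ᵀ * A * (E * (1 - V))).trace = 0 := by
    have hsplit : (E * (1 - V))ᵀ * A * (E * (1 - V)) = (1 - V)ᵀ * (Eᵀ * A * E) * (1 - V) := by
      simp only [transpose_mul, Matrix.mul_assoc]
    rw [hsplit, hE, Matrix.mul_zero, Matrix.zero_mul, trace_zero]
  have hVP := trace_mul_le_trace_of_posSemidef hP (V := Vᵀ) (by rwa [transpose_transpose])
  rw [trace_transpose_mul_mul_add hA, hcross, hreset,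
    trace_transpose_mul_mul_of_mul_transpose_eq_one A R (mul_eq_one_comm.mp hU)]
  linarith

end TraceInequalities

section BlockMatrices

variable {n : ℕ}

def unitBlock (j : Fin n) : Matrix (Fin n × Fin 3) (Fin 3) ℝ :=
  stack (Pi.single j 1)

lemma transpose_stack_mul_stack (As Bs : Fin n → Matrix (Fin 3) (Fin 3) ℝ) :
    (stack As)ᵀ * stack Bs = ∑ i, (As i)ᵀ * Bs i := by
  ext a b
  simp [stack, mul_apply, Fintype.sum_prod_type, Matrix.sum_apply]

lemma mul_unitBlock (A : Matrix (Fin n × Fin 3) (Fin n × Fin 3) ℝ) (j : Fin n) :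
    A * unitBlock j = stack fun i => blk A i j := by
  ext p b
  simp only [unitBlock, stack, blk, mul_apply, Fintype.sum_prod_type]
  rw [Finset.sum_eq_single j (fun i _ hi => by simp [Pi.single_eq_of_ne hi]) (by simp)]
  simp [one_apply]

lemma transpose_unitBlock_mul_mul_unitBlock (A : Matrix (Fin n × Fin 3) (Fin n × Fin 3) ℝ)
    (i j : Fin n) : (unitBlock i)ᵀ * A * unitBlock j = blk A i j := by
  rw [Matrix.mul_assoc, mul_unitBlock, unitBlock, transpose_stack_mul_stack,
    Finset.sum_eq_single i (fun k _ hk => by simp [Pi.single_eq_of_ne hk]) (by simp)]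
  simp

lemma ite_eq_add_unitBlock_mul (X : Matrix (Fin n × Fin 3) (Fin 3) ℝ) (j : Fin n) :
    (fun p b => if p.1 = j then (1 : Matrix (Fin 3) (Fin 3) ℝ) p.2 b else X p b :
      Matrix (Fin n × Fin 3) (Fin 3) ℝ)
      = X + unitBlock j * (1 - of fun a b => X (j, a) b) := by
  ext ⟨i, a⟩ b
  change _ = X (i, a) b + (unitBlock j * (1 - of fun a b => X (j, a) b) : Matrix _ _ ℝ) (i, a) b
  split_ifs with hi
  · subst hi
    simp [unitBlock, stack, mul_apply, one_apply]
  · simp [unitBlock, stack, mul_apply, hi]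

end BlockMatrices

theorem rcd_monotone_decrease_general {m : ℕ}
    (Rt : Matrix (Fin (m + 1) × Fin 3) (Fin (m + 1) × Fin 3) ℝ)
    (hsym : Rtᵀ = Rt) (hdiag : ∀ i : Fin (m + 1), blk Rt i i = 0)
    (Rs : Fin (m + 1) → Matrix (Fin 3) (Fin 3) ℝ)
    (hRs : ∀ i, (Rs i)ᵀ * Rs i = 1)
    (hInv : IsUnit (((stack fun i : Fin m => Rs i.succ)ᵀ *
      (show Matrix (Fin m × Fin 3) (Fin 3) ℝ from
        fun p b => Rt (p.1.succ, p.2) (0, b))).det)) :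
    letI R := stack Rs
    letI W : Matrix (Fin (m + 1) × Fin 3) (Fin 3) ℝ := fun p b => Rt p (0, b)
    letI Z := R * (Rᵀ * W)
    letI S := Z * pinv (psqrt (Wᵀ * Z))
    letI Rnew : Matrix (Fin (m + 1) × Fin 3) (Fin 3) ℝ := fun p b => if p.1 = 0 then (1 : Matrix (Fin 3) (Fin 3) ℝ) p.2 b else S p b;
    -(Rnewᵀ * Rt * Rnew).trace ≤ -(Rᵀ * Rt * R).trace := by
  have hW : (fun p b => Rt p (0, b) : Matrix (Fin (m + 1) × Fin 3) (Fin 3) ℝ)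
      = Rt * unitBlock (0 : Fin (m + 1)) :=
    (mul_unitBlock Rt 0).symm
  have hM : IsUnit ((stack Rs)ᵀ * (Rt * unitBlock (0 : Fin (m + 1)))).det := by
    rwa [mul_unitBlock, transpose_stack_mul_stack, Fin.sum_univ_succ, hdiag 0,
      Matrix.mul_zero, zero_add, ← transpose_stack_mul_stack]
  set M := (stack Rs)ᵀ * (Rt * unitBlock (0 : Fin (m + 1)))
  have hU : (polarFactor M)ᵀ * polarFactor M = 1 := polarFactor_transpose_mul_self hM
  have hV : (Rs 0 * polarFactor M)ᵀ * (Rs 0 * polarFactor M) = 1 := by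
    rw [transpose_mul, Matrix.mul_assoc, ← Matrix.mul_assoc (Rs 0)ᵀ, hRs 0, Matrix.one_mul, hU]
  have hEP :
      (unitBlock (0 : Fin (m + 1)))ᵀ * Rt * (stack Rs * polarFactor M) = psqrt (Mᵀ * M) := by
    rw [← transpose_mul_polarFactor hM, transpose_mul, transpose_mul, transpose_transpose, hsym]
    simp only [Matrix.mul_assoc]
  rw [hW, mul_pinv_psqrt_eq_mul_polarFactor hM, ite_eq_add_unitBlock_mul]
  exact neg_le_neg (trace_le_trace_of_rotate_and_reset hsym
    (by rw [transpose_unitBlock_mul_mul_unitBlock, hdiag]) hU hV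
    (psqrt_spec (posSemidef_transpose_mul_self M)).1 hEP)

/-- Monotone decrease of one RCD iteration (with `k = 1`, i.e. reference block `0`):
for symmetric `R̃` with zero diagonal blocks, `R` stacking orthogonal matrices,
`W` the first block column of `R̃`, `R'`/`C` the stackings of the remaining blocks of
`R`/`W` with `R'ᵀ C` invertible, `Z = R (Rᵀ W)`, `S = Z ((Wᵀ Z)^{1/2})^†`, and `R_new`
the block vector with first block `I₃` and remaining blocks those of `S`, we have
`−tr(R_newᵀ R̃ R_new) ≤ −tr(Rᵀ R̃ R)`. -/
theorem rcd_monotone_decrease {m : ℕ} (hm : 1 ≤ m)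
    (Rt : Matrix (Fin (m + 1) × Fin 3) (Fin (m + 1) × Fin 3) ℝ)
    (hsym : Rtᵀ = Rt) (hdiag : ∀ i : Fin (m + 1), blk Rt i i = 0)
    (Rs : Fin (m + 1) → Matrix (Fin 3) (Fin 3) ℝ)
    (hRs : ∀ i, (Rs i)ᵀ * Rs i = 1)
    (hInv : IsUnit (((stack fun i : Fin m => Rs i.succ)ᵀ *
      (show Matrix (Fin m × Fin 3) (Fin 3) ℝ from
        fun p b => Rt (p.1.succ, p.2) (0, b))).det)) :
    letI R := stack Rs
    letI W : Matrix (Fin (m + 1) × Fin 3) (Fin 3) ℝ := fun p b => Rt p (0, b)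
    letI Z := R * (Rᵀ * W)
    letI S := Z * pinv (psqrt (Wᵀ * Z))
    letI Rnew : Matrix (Fin (m + 1) × Fin 3) (Fin 3) ℝ := fun p b => if p.1 = 0 then (1 : Matrix (Fin 3) (Fin 3) ℝ) p.2 b else S p b;
    -(Rnewᵀ * Rt * Rnew).trace ≤ -(Rᵀ * Rt * R).trace :=
  rcd_monotone_decrease_general Rt hsym hdiag Rs hRs hInv
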